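/- arXiv:2512.00583 — 2 statements merged into one kernel-verified Lean document; each statement's English description precedes it below -/
import Mathlib

section
/- Hadamard directional differentiability of the sup functional: the map σ: C(K) → ℝ, σ(f) = max_{x∈K} f(x), is Hadamard directionally differentiable at every f ∈ C(K), with directional derivative σ'_f(h) = max_{x ∈ E(f)} h(x), where E(f) = argmax f; in particular if E(f) = {x₀} is a singleton then σ'_f(h) = h(x₀) is linear. -/
open Filter

/-- Hadamard directional differentiability of the sup functional
`σ(f) = max_{x ∈ K} f x` on `C(K,ℝ)` (`K` compact, nonempty): for every `f`, all
`h_n → h` in `C(K,ℝ)` and all `t_n ↓ 0`,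
`(σ(f + t_n h_n) - σ(f)) / t_n → σ'_f(h) = max_{x ∈ E(f)} h x`,
where `E(f)` is the set of maximizers of `f`; in particular, if `E(f) = {x₀}` is
a singleton, the directional derivative is `h x₀`. -/
theorem sup_functional_hadamard_directionally_differentiable
    {K : Type*} [TopologicalSpace K] [CompactSpace K] [Nonempty K]
    (f h : C(K, ℝ)) (hn : ℕ → C(K, ℝ)) (tn : ℕ → ℝ)
    (hhn : Tendsto hn atTop (nhds h))
    (htn : Tendsto tn atTop (nhds 0)) (htnpos : ∀ n, 0 < tn n) :
    Tendsto
      (fun n => ((⨆ x : K, (f + tn n • hn n) x) - ⨆ x : K, f x) / tn n)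
      atTop
      (nhds (⨆ x : {x : K // ∀ y, f y ≤ f x}, h x.1)) ∧
    (∀ x₀ : K, (∀ y, f y ≤ f x₀) → (∀ x, (∀ y, f y ≤ f x) → x = x₀) →
      (⨆ x : {x : K // ∀ y, f y ≤ f x}, h x.1) = h x₀) := by
  have hbddf : BddAbove (Set.range fun x : K => f x) :=
    (isCompact_range f.continuous).bddAbove
  set σf := ⨆ x : K, f x with hσf
  -- f attains its max
  obtain ⟨x₀, -, hx₀⟩ := isCompact_univ.exists_isMaxOn Set.univ_nonempty
    f.continuous.continuousOn
  have hx₀' : ∀ y, f y ≤ f x₀ := fun y => hx₀ (Set.mem_univ y)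
  set S : Set K := {x | ∀ y, f y ≤ f x} with hS
  have hx₀S : x₀ ∈ S := hx₀'
  have hfz : ∀ z ∈ S, f z = σf := fun z hz =>
    le_antisymm (le_ciSup hbddf z) (ciSup_le hz)
  -- S is compact
  have hSclosed : IsClosed S := by
    have : S = ⋂ y, {x | f y ≤ f x} := by ext x; simp [hS, Set.mem_iInter]
    rw [this]
    exact isClosed_iInter fun y => isClosed_le continuous_const f.continuous
  -- h attains its max on S
  obtain ⟨xs, hxsS, hxs⟩ := hSclosed.isCompact.exists_isMaxOn ⟨x₀, hx₀S⟩
    h.continuous.continuousOn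
  haveI : Nonempty {x : K // ∀ y, f y ≤ f x} := ⟨⟨x₀, hx₀'⟩⟩
  have hbddS : BddAbove (Set.range fun x : {x : K // ∀ y, f y ≤ f x} => h x.1) := by
    refine ⟨‖h‖, ?_⟩
    rintro _ ⟨z, rfl⟩
    exact (le_abs_self _).trans (by simpa using h.norm_coe_le_norm z.1)
  have hM : (⨆ x : {x : K // ∀ y, f y ≤ f x}, h x.1) = h xs :=
    le_antisymm (ciSup_le fun z => hxs z.2) (le_ciSup hbddS ⟨xs, hxsS⟩)
  set M := ⨆ x : {x : K // ∀ y, f y ≤ f x}, h x.1 with hMdef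
  constructor
  · rw [Metric.tendsto_nhds]
    intro ε hε
    have hnorm0 : Tendsto (fun n => ‖hn n - h‖) atTop (nhds 0) :=
      tendsto_iff_norm_sub_tendsto_zero.mp hhn
    have hEv1 : ∀ᶠ n in atTop, ‖hn n - h‖ < ε / 2 :=
      hnorm0.eventually_lt_const (by linarith)
    have hevalxs : Tendsto (fun n => hn n xs) atTop (nhds (h xs)) :=
      ((continuous_eval_const xs).tendsto h).comp hhn
    have hEv3 : ∀ᶠ n in atTop, M - ε < hn n xs := by
      refine hevalxs.eventually_const_lt ?_
      rw [hM]; linarith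
    have hpt : ∀ (n : ℕ) (x : K), M + ε / 2 ≤ h x → False → True := fun _ _ _ _ => trivial
    have hkey : ∀ᶠ n in atTop, ∀ x : K,
        f x + tn n * hn n x ≤ σf + tn n * (M + ε / 2 + ‖hn n - h‖) := by
      have hVbound : ∀ (n : ℕ) (x : K), h x < M + ε / 2 →
          f x + tn n * hn n x ≤ σf + tn n * (M + ε / 2 + ‖hn n - h‖) := by
        intro n x hx
        have h1 : f x ≤ σf := le_ciSup hbddf x
        have h2 : hn n x - h x ≤ ‖hn n - h‖ :=
          (le_abs_self _).trans (by simpa using (hn n - h).norm_coe_le_norm x)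
        have h3 : hn n x ≤ M + ε / 2 + ‖hn n - h‖ := by linarith
        have h4 : tn n * hn n x ≤ tn n * (M + ε / 2 + ‖hn n - h‖) :=
          mul_le_mul_of_nonneg_left h3 (htnpos n).le
        linarith
      by_cases hC : ({x : K | M + ε / 2 ≤ h x}).Nonempty
      · -- C nonempty : get max of f on C, strictly below σf
        have hCclosed : IsClosed {x : K | M + ε / 2 ≤ h x} :=
          isClosed_le continuous_const h.continuous
        obtain ⟨c, hcC, hc⟩ := hCclosed.isCompact.exists_isMaxOn hC
          f.continuous.continuousOn
        have hcS : c ∉ S := by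
          intro hcS
          have := hxs hcS
          rw [← hM] at this
          have : M + ε / 2 ≤ M := le_trans hcC this
          linarith
        have hfc : f c < σf := by
          rcases not_forall.mp hcS with ⟨y, hy⟩
          exact lt_of_lt_of_le (not_le.mp hy) (le_ciSup hbddf y)
        set δ := σf - f c with hδdef
        have hδ : 0 < δ := by simp [hδdef]; linarith
        have hEv4 : ∀ᶠ n in atTop, tn n * (‖hn n‖ - (M + ε / 2)) < δ := by
          have : Tendsto (fun n => tn n * (‖hn n‖ - (M + ε / 2))) atTop
              (nhds (0 * (‖h‖ - (M + ε / 2)))) :=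
            htn.mul (hhn.norm.sub tendsto_const_nhds)
          rw [zero_mul] at this
          exact this.eventually_lt_const hδ
        filter_upwards [hEv4] with n h4 x
        by_cases hx : M + ε / 2 ≤ h x
        · -- x in C
          have h1 : f x ≤ f c := hc hx
          have h2 : hn n x ≤ ‖hn n‖ :=
            (le_abs_self _).trans (by simpa using (hn n).norm_coe_le_norm x)
          have h3 : tn n * hn n x ≤ tn n * ‖hn n‖ :=
            mul_le_mul_of_nonneg_left h2 (htnpos n).le
          have h5 : tn n * ‖hn n‖ - tn n * (M + ε / 2) < δ := by
            have := h4; nlinarith [htnpos n]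
          have h6 : tn n * (M + ε / 2) ≤ tn n * (M + ε / 2 + ‖hn n - h‖) :=
            mul_le_mul_of_nonneg_left (by linarith [norm_nonneg (hn n - h)]) (htnpos n).le
          linarith
        · exact hVbound n x (not_le.mp hx)
      · -- C empty
        filter_upwards with n x
        exact hVbound n x (not_le.mp fun hh => hC ⟨x, hh⟩)
    filter_upwards [hEv1, hEv3, hkey] with n h1 h3 hk
    have hbddG : BddAbove (Set.range fun x : K => (f + tn n • hn n) x) :=
      (isCompact_range (f + tn n • hn n).continuous).bddAbove
    have happ : ∀ x : K, (f + tn n • hn n) x = f x + tn n * hn n x := by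
      intro x; simp [smul_eq_mul]
    have hsup_le : (⨆ x : K, (f + tn n • hn n) x) ≤ σf + tn n * (M + ε / 2 + ‖hn n - h‖) :=
      ciSup_le fun x => by rw [happ x]; exact hk x
    have hsup_ge : σf + tn n * hn n xs ≤ ⨆ x : K, (f + tn n • hn n) x := by
      have := le_ciSup hbddG xs
      rw [happ xs, hfz xs hxsS] at this
      exact this
    have hub : ((⨆ x : K, (f + tn n • hn n) x) - σf) / tn n ≤ M + ε / 2 + ‖hn n - h‖ := by
      rw [div_le_iff₀ (htnpos n)]
      nlinarith [htnpos n]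
    have hlb : hn n xs ≤ ((⨆ x : K, (f + tn n • hn n) x) - σf) / tn n := by
      rw [le_div_iff₀ (htnpos n)]
      nlinarith [htnpos n]
    rw [Real.dist_eq, abs_sub_lt_iff]
    constructor <;> linarith
  · intro y₀ hy₀ huniq
    rw [hM, huniq xs hxsS]
end

section
/- In the singleton-argmax case, the maximum absolute difference functional d(f) = max_{x∈K} |f(x)| applied to f = P^{(1)} - P^{(2)} has Hadamard directional derivative d'_f(h) = sign(f(x₀)) · h(x₀) when |f| attains its maximum at a unique point x₀ with f(x₀) ≠ 0. -/
/-!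
Write `g = f + t • k` and let `x` maximise `|g|`. Comparing `‖·‖` with the evaluations at `x₀`
and at `x`, weighted by the signs of `f x₀` and `g x`, squeezes the difference quotient:
`sign (f x₀) * k x₀ ≤ (‖g‖ - ‖f‖) / t ≤ sign (g x) * k x`.
Along `t → 0`, `k → h` the maximisers of `|g|` converge to the unique maximiser `x₀` of `|f|`
by compactness, so `g x → f x₀ ≠ 0`, near which `sign` is constant, and both bounds tend to
`sign (f x₀) * h x₀`.
-/

open Filter Topology

namespace Real

theorem sign_mul_self_eq_abs (r : ℝ) : sign r * r = |r| := by
  rcases lt_trichotomy r 0 with hr | rfl | hr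
  · rw [sign_of_neg hr, abs_of_neg hr, neg_one_mul]
  · simp
  · rw [sign_of_pos hr, abs_of_pos hr, one_mul]

theorem sign_mul_le_abs (r y : ℝ) : sign r * y ≤ |y| := by
  rcases sign_apply_eq r with h | h | h <;> rw [h]
  · simpa using neg_le_abs y
  · simp
  · simpa using le_abs_self y

theorem continuousAt_sign {a : ℝ} (ha : a ≠ 0) : ContinuousAt sign a := by
  rcases ha.lt_or_gt with ha | ha
  · refine (continuousAt_const (y := sign a)).congr ?_
    filter_upwards [eventually_lt_nhds ha] with y hy
    rw [sign_of_neg hy, sign_of_neg ha]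
  · refine (continuousAt_const (y := sign a)).congr ?_
    filter_upwards [eventually_gt_nhds ha] with y hy
    rw [sign_of_pos hy, sign_of_pos ha]

end Real

theorem tendsto_nhds_of_tendsto_comp_of_unique_preimage {K Y ι : Type*} [TopologicalSpace K]
    [CompactSpace K] [TopologicalSpace Y] [T2Space Y] {φ : K → Y} (hφ : Continuous φ) {x₀ : K}
    (huniq : ∀ x, φ x = φ x₀ → x = x₀) {l : Filter ι} {X : ι → K}
    (hlim : Tendsto (φ ∘ X) l (𝓝 (φ x₀))) : Tendsto X l (𝓝 x₀) := by
  refine tendsto_nhds_of_unique_mapClusterPt fun y hy => huniq y ?_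
  have hφy : MapClusterPt (φ y) l (φ ∘ X) := hy.continuousAt_comp hφ.continuousAt
  exact eq_of_nhds_neBot (hφy.neBot.mono (inf_le_inf_left _ hlim))

namespace ContinuousMap

variable {K E : Type*} [TopologicalSpace K] [CompactSpace K] [NormedAddCommGroup E]

theorem exists_norm_eq_norm_apply [Nonempty K] (f : C(K, E)) : ∃ x, ‖f‖ = ‖f x‖ := by
  obtain ⟨x, -, hx⟩ := isCompact_univ.exists_isMaxOn Set.univ_nonempty
    (map_continuous f).norm.continuousOn
  exact ⟨x, le_antisymm ((norm_le _ (norm_nonneg _)).2 fun y => hx (Set.mem_univ y))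
    (f.norm_coe_le_norm x)⟩

theorem tendsto_norm_apply_of_tendsto_of_norm_eq {ι : Type*} {l : Filter ι} {g : ι → C(K, E)}
    {f : C(K, E)} (hg : Tendsto g l (𝓝 f)) {X : ι → K} (hX : ∀ i, ‖g i‖ = ‖g i (X i)‖) :
    Tendsto (fun i => ‖f (X i)‖) l (𝓝 ‖f‖) := by
  have hgX : Tendsto (fun i => ‖g i (X i)‖) l (𝓝 ‖f‖) := by
    simpa only [← hX] using hg.norm
  refine hgX.congr_dist <| squeeze_zero (fun _ => dist_nonneg) (fun i => ?_)
    (tendsto_iff_dist_tendsto_zero.1 hg)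
  calc dist ‖g i (X i)‖ ‖f (X i)‖ ≤ dist (g i (X i)) (f (X i)) :=
        (dist_norm_norm_le _ _).trans_eq (dist_eq_norm _ _).symm
    _ ≤ dist (g i) f := dist_apply_le_dist _

theorem norm_sub_norm_le_sign_mul_sub (g y : C(K, ℝ)) {x : K} (hx : ‖g‖ = ‖g x‖) :
    ‖g‖ - ‖y‖ ≤ Real.sign (g x) * (g x - y x) := by
  have hy : |y x| ≤ ‖y‖ := by simpa only [Real.norm_eq_abs] using y.norm_coe_le_norm x
  rw [mul_sub, Real.sign_mul_self_eq_abs, hx, Real.norm_eq_abs]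
  linarith [Real.sign_mul_le_abs (g x) (y x)]

end ContinuousMap

theorem maxabs_functional_hadamard_derivative_general
    {K : Type*} [MetricSpace K] [CompactSpace K]
    (f : C(K, ℝ)) (x₀ : K)
    (hmax : ∀ x, |f x| ≤ |f x₀|)
    (huniq : ∀ x, |f x| = |f x₀| → x = x₀)
    (hne : f x₀ ≠ 0)
    (h : C(K, ℝ)) (hn : ℕ → C(K, ℝ)) (tn : ℕ → ℝ)
    (hhn : Tendsto hn atTop (nhds h))
    (htn : Tendsto tn atTop (nhds 0)) (htnpos : ∀ n, 0 < tn n) :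
    Tendsto (fun n => (‖f + tn n • hn n‖ - ‖f‖) / tn n) atTop
      (nhds (Real.sign (f x₀) * h x₀)) := by
  have : Nonempty K := ⟨x₀⟩
  set g : ℕ → C(K, ℝ) := fun n => f + tn n • hn n with hg_def
  have hg : Tendsto g atTop (𝓝 f) := by
    simpa using tendsto_const_nhds.add (htn.smul hhn)
  have hf : ‖f‖ = ‖f x₀‖ :=
    le_antisymm ((ContinuousMap.norm_le _ (norm_nonneg _)).2 hmax) (f.norm_coe_le_norm x₀)
  choose X hX using fun n => (g n).exists_norm_eq_norm_apply
  have hXlim : Tendsto X atTop (𝓝 x₀) :=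
    tendsto_nhds_of_tendsto_comp_of_unique_preimage (map_continuous f).norm huniq
      (hf ▸ ContinuousMap.tendsto_norm_apply_of_tendsto_of_norm_eq hg hX)
  have hlower : ∀ n, Real.sign (f x₀) * hn n x₀ ≤ (‖g n‖ - ‖f‖) / tn n := fun n => by
    have := f.norm_sub_norm_le_sign_mul_sub (g n) hf
    simp only [hg_def, ContinuousMap.add_apply, ContinuousMap.smul_apply, smul_eq_mul] at this
    rw [le_div_iff₀ (htnpos n)]
    linarith
  have hupper : ∀ n, (‖g n‖ - ‖f‖) / tn n ≤ Real.sign (g n (X n)) * hn n (X n) := fun n => by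
    have := (g n).norm_sub_norm_le_sign_mul_sub f (hX n)
    simp only [hg_def, ContinuousMap.add_apply, ContinuousMap.smul_apply, smul_eq_mul] at this ⊢
    rw [div_le_iff₀ (htnpos n)]
    linarith
  have hsign : Tendsto (fun n => Real.sign (g n (X n))) atTop (𝓝 (Real.sign (f x₀))) :=
    (Real.continuousAt_sign hne).tendsto.comp
      ((continuous_eval.tendsto (f, x₀)).comp (hg.prodMk_nhds hXlim))
  have hhnX : Tendsto (fun n => hn n (X n)) atTop (𝓝 (h x₀)) :=
    (continuous_eval.tendsto (h, x₀)).comp (hhn.prodMk_nhds hXlim)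
  have hhnx₀ : Tendsto (fun n => hn n x₀) atTop (𝓝 (h x₀)) :=
    ((continuous_eval_const x₀).tendsto h).comp hhn
  exact tendsto_of_tendsto_of_tendsto_of_le_of_le (tendsto_const_nhds.mul hhnx₀)
    (hsign.mul hhnX) hlower hupper

/-- In the singleton-argmax case, the maximum absolute difference
functional `d(g) = ‖g‖_∞ = max_{x ∈ K} |g x|` has Hadamard directional
derivative `d'_f(h) = sign (f x₀) · h x₀` at any `f ∈ C(K,ℝ)` whose absolute
value attains its maximum at a unique point `x₀` with `f x₀ ≠ 0`: for all
`h_n → h` in `C(K,ℝ)` and `t_n ↓ 0`,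
`(d(f + t_n h_n) - d(f)) / t_n → sign (f x₀) · h x₀`. -/
theorem maxabs_functional_hadamard_derivative
    {K : Type*} [MetricSpace K] [CompactSpace K] [Nonempty K]
    (f : C(K, ℝ)) (x₀ : K)
    (hmax : ∀ x, |f x| ≤ |f x₀|)
    (huniq : ∀ x, |f x| = |f x₀| → x = x₀)
    (hne : f x₀ ≠ 0)
    (h : C(K, ℝ)) (hn : ℕ → C(K, ℝ)) (tn : ℕ → ℝ)
    (hhn : Tendsto hn atTop (nhds h))
    (htn : Tendsto tn atTop (nhds 0)) (htnpos : ∀ n, 0 < tn n) :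
    Tendsto (fun n => (‖f + tn n • hn n‖ - ‖f‖) / tn n) atTop
      (nhds (Real.sign (f x₀) * h x₀)) :=
  maxabs_functional_hadamard_derivative_general f x₀ hmax huniq hne h hn tn hhn htn htnpos
end
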